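/- For every a > 0 and every integer n ≥ 1, 1/(2(n+a)) + α₃/(n+a)² ≤ γ(a) - x_n < 1/(2(n+a)) + 1/(12(n+a)²), where α₃ = (1+a)²(ln(1+a) - ψ(1+a)) - (1+a)/2, x_n = ψ(n+a) - ψ(a) - ln((n+a)/a), and γ(a) = ln(a) - ψ(a). These constants α₃ and 1/12 are best possible. -/

import Mathlib

/-!
Put `t = n + a`, so that `γ(a) - x_n = 1 / (2 t) + h t` with `h t = log t - ψ t - 1 / (2 t)`
(`digammaRem`). The functional equation `ψ (t + 1) = ψ t + 1 / t` gives
`h t - h (t + 1) = G (1 / (2 t + 1))`, where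
`G u = 2 u / (1 - u²) - log ((1 + u) / (1 - u)) = ∑_{k ≥ 1} 4k / (2k + 1) u^(2k+1)`
(`artanhGap`), and log-convexity of `Γ` gives `log t - 1 / t ≤ ψ t ≤ log t`, hence
`h t → 0`. Comparing the differences `h t - h (t + 1)` with those of `1 / (12 t²)` and of
the first six terms `D` of the inverse factorial series of `h` (`factorialSeries`) yields
`D t ≤ h t < 1 / (12 t²)` for `t ≥ 1`. These two bounds show that `t² h t` increases along
`t, t + 1, …`, which is the lower bound with `α₃ = (1 + a)² h (1 + a)`, and that
`t² h t → 1 / 12`, which makes `1 / 12` optimal.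
-/

open Real Filter Topology Set

noncomputable def digamma (x : ℝ) : ℝ := deriv Real.Gamma x / Real.Gamma x

noncomputable def trigamma (x : ℝ) : ℝ := deriv digamma x

lemma hasDerivAt_log_Gamma {x : ℝ} (hx : 0 < x) :
    HasDerivAt (fun y => log (Gamma y)) (digamma x) x :=
  ((differentiableAt_Gamma fun m => by linarith [(m.cast_nonneg : (0 : ℝ) ≤ m)]).hasDerivAt).log
    (Gamma_pos_of_pos hx).ne'

lemma digamma_add_one {x : ℝ} (hx : 0 < x) : digamma (x + 1) = digamma x + x⁻¹ := by
  have hshift : HasDerivAt (fun y => log (Gamma (y + 1))) (digamma (x + 1)) x := by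
    simpa using (hasDerivAt_log_Gamma (by linarith : 0 < x + 1)).comp_add_const x 1
  have hsplit : (fun y => log (Gamma (y + 1))) =ᶠ[𝓝 x] fun y => log y + log (Gamma y) := by
    filter_upwards [eventually_gt_nhds hx] with y hy
    rw [Gamma_add_one hy.ne', log_mul hy.ne' (Gamma_pos_of_pos hy).ne']
  rw [hshift.unique (((hasDerivAt_log hx.ne').add (hasDerivAt_log_Gamma hx))
    |>.congr_of_eventuallyEq hsplit)]
  ring

lemma slope_log_Gamma {x : ℝ} (hx : 0 < x) :
    slope (fun y => log (Gamma y)) x (x + 1) = log x := by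
  rw [slope_def_field, Gamma_add_one hx.ne', log_mul hx.ne' (Gamma_pos_of_pos hx).ne']
  ring

lemma digamma_le_log {x : ℝ} (hx : 0 < x) : digamma x ≤ log x :=
  slope_log_Gamma hx ▸ convexOn_log_Gamma.le_slope_of_hasDerivAt hx (mem_Ioi.2 (by linarith))
    (by linarith) (hasDerivAt_log_Gamma hx)

lemma log_le_digamma_add_inv {x : ℝ} (hx : 0 < x) : log x ≤ digamma x + x⁻¹ :=
  digamma_add_one hx ▸ slope_log_Gamma hx ▸ convexOn_log_Gamma.slope_le_of_hasDerivAt hx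
    (mem_Ioi.2 (by linarith)) (by linarith) (hasDerivAt_log_Gamma (by linarith))

lemma tendsto_log_sub_digamma_atTop :
    Tendsto (fun x => log x - digamma x) atTop (𝓝 0) := by
  refine tendsto_of_tendsto_of_tendsto_of_le_of_le' tendsto_const_nhds tendsto_inv_atTop_zero
    ?_ ?_
  all_goals filter_upwards [eventually_gt_atTop 0] with x hx
  · linarith [digamma_le_log hx]
  · linarith [log_le_digamma_add_inv hx]

lemma le_of_sub_add_one_le_of_tendsto {u v : ℝ → ℝ} {t : ℝ}
    (hu : Tendsto u atTop (𝓝 0)) (hv : Tendsto v atTop (𝓝 0))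
    (hstep : ∀ s, t ≤ s → u s - u (s + 1) ≤ v s - v (s + 1)) : u t ≤ v t := by
  have hanti : Antitone fun N : ℕ => v (t + N) - u (t + N) := by
    refine antitone_nat_of_succ_le fun N => ?_
    have := hstep (t + N) (by simp)
    push_cast
    rw [← add_assoc]
    linarith
  have hlim : Tendsto (fun N : ℕ => v (t + N) - u (t + N)) atTop (𝓝 0) := by
    have := (hv.sub hu).comp (tendsto_atTop_add_const_left _ t tendsto_natCast_atTop_atTop)
    rwa [sub_zero] at this
  simpa using hanti.le_of_tendsto hlim 0

lemma pos_of_hasDerivAt_pos {g g' : ℝ → ℝ} {b : ℝ} (hg0 : g 0 = 0)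
    (hg : ∀ v ∈ Icc 0 b, HasDerivAt g (g' v) v) (hg' : ∀ v ∈ Ioo 0 b, 0 < g' v) {u : ℝ}
    (hu : u ∈ Ioc 0 b) : 0 < g u := by
  have hmono : StrictMonoOn g (Icc 0 b) :=
    strictMonoOn_of_deriv_pos (convex_Icc 0 b)
      (fun v hv => (hg v hv).continuousAt.continuousWithinAt)
      (fun v hv => by
        rw [interior_Icc] at hv
        rw [(hg v (Ioo_subset_Icc_self hv)).deriv]
        exact hg' v hv)
  simpa [hg0] using hmono ⟨le_rfl, hu.1.le.trans hu.2⟩ ⟨hu.1.le, hu.2⟩ hu.1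

noncomputable def artanhGap (u : ℝ) : ℝ := 2 * u / (1 - u ^ 2) - (log (1 + u) - log (1 - u))

lemma hasDerivAt_artanhGap {u : ℝ} (hu : u ∈ Ioo (-1 : ℝ) 1) :
    HasDerivAt artanhGap (4 * u ^ 2 / (1 - u ^ 2) ^ 2) u := by
  obtain ⟨h1, h2⟩ := hu
  have hp : 0 < 1 + u := by linarith
  have hm : 0 < 1 - u := by linarith
  have hsq : 1 - u ^ 2 ≠ 0 := by nlinarith
  have hden : HasDerivAt (fun u : ℝ => 1 - u ^ 2) (-(2 * u)) u := by
    simpa using (hasDerivAt_pow 2 u).const_sub 1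
  have hfrac := ((hasDerivAt_id u).const_mul 2).div hden hsq
  have hlog := (((hasDerivAt_id u).const_add 1).log hp.ne').sub
    (((hasDerivAt_id u).const_sub 1).log hm.ne')
  refine (hfrac.sub hlog).congr_deriv ?_
  simp only [id, mul_one]
  field_simp
  ring

noncomputable def artanhGapLower (u : ℝ) : ℝ := 4 / 3 * u ^ 3 + 8 / 5 * u ^ 5 + 12 / 7 * u ^ 7

noncomputable def artanhGapUpper (u : ℝ) : ℝ := artanhGapLower u + 9 / 4 * u ^ 9

lemma hasDerivAt_artanhGapLower (u : ℝ) :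
    HasDerivAt artanhGapLower (4 * u ^ 2 + 8 * u ^ 4 + 12 * u ^ 6) u :=
  (((hasDerivAt_pow 3 u).const_mul _).add ((hasDerivAt_pow 5 u).const_mul _)).add
    ((hasDerivAt_pow 7 u).const_mul _) |>.congr_deriv (by ring)

lemma hasDerivAt_artanhGapUpper (u : ℝ) :
    HasDerivAt artanhGapUpper (4 * u ^ 2 + 8 * u ^ 4 + 12 * u ^ 6 + 81 / 4 * u ^ 8) u :=
  (hasDerivAt_artanhGapLower u).add ((hasDerivAt_pow 9 u).const_mul _) |>.congr_deriv (by ring)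

lemma artanhGapLower_le {u : ℝ} (hu0 : 0 < u) (hu1 : u < 1) :
    artanhGapLower u ≤ artanhGap u := by
  have hd : ∀ v ∈ Icc 0 u, HasDerivAt (fun v => artanhGap v - artanhGapLower v)
      (4 * v ^ 2 / (1 - v ^ 2) ^ 2 - (4 * v ^ 2 + 8 * v ^ 4 + 12 * v ^ 6)) v :=
    fun v hv => (hasDerivAt_artanhGap ⟨by linarith [hv.1], by linarith [hv.2]⟩).sub
      (hasDerivAt_artanhGapLower v)
  suffices hpos : ∀ v ∈ Ioo 0 u,
      0 < 4 * v ^ 2 / (1 - v ^ 2) ^ 2 - (4 * v ^ 2 + 8 * v ^ 4 + 12 * v ^ 6) from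
    (sub_pos.1 (pos_of_hasDerivAt_pos (by simp [artanhGap, artanhGapLower]) hd hpos
      ⟨hu0, le_rfl⟩)).le
  rintro v ⟨hv0, hvu⟩
  have hsq : 0 < 1 - v ^ 2 := by nlinarith
  have : 4 * v ^ 2 / (1 - v ^ 2) ^ 2 - (4 * v ^ 2 + 8 * v ^ 4 + 12 * v ^ 6) =
      4 * v ^ 8 * (4 - 3 * v ^ 2) / (1 - v ^ 2) ^ 2 := by
    field_simp
    ring
  rw [this]
  have : 0 < 4 - 3 * v ^ 2 := by nlinarith
  positivity

lemma artanhGap_le_artanhGapUpper {u : ℝ} (hu0 : 0 < u) (hu : u ≤ 1 / 3) :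
    artanhGap u ≤ artanhGapUpper u := by
  have hd : ∀ v ∈ Icc 0 u, HasDerivAt (fun v => artanhGapUpper v - artanhGap v)
      (4 * v ^ 2 + 8 * v ^ 4 + 12 * v ^ 6 + 81 / 4 * v ^ 8 - 4 * v ^ 2 / (1 - v ^ 2) ^ 2) v :=
    fun v hv => (hasDerivAt_artanhGapUpper v).sub
      (hasDerivAt_artanhGap ⟨by linarith [hv.1], by linarith [hv.2]⟩)
  suffices hpos : ∀ v ∈ Ioo 0 u,
      0 < 4 * v ^ 2 + 8 * v ^ 4 + 12 * v ^ 6 + 81 / 4 * v ^ 8 - 4 * v ^ 2 / (1 - v ^ 2) ^ 2 from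
    (sub_pos.1 (pos_of_hasDerivAt_pos (by simp [artanhGap, artanhGapUpper, artanhGapLower]) hd
      hpos ⟨hu0, le_rfl⟩)).le
  rintro v ⟨hv0, hvu⟩
  have hsq : 0 < 1 - v ^ 2 := by nlinarith
  have : 4 * v ^ 2 + 8 * v ^ 4 + 12 * v ^ 6 + 81 / 4 * v ^ 8 - 4 * v ^ 2 / (1 - v ^ 2) ^ 2 =
      v ^ 8 * (17 / 4 - 57 / 2 * v ^ 2 + 81 / 4 * v ^ 4) / (1 - v ^ 2) ^ 2 := by
    field_simp
    ring
  rw [this]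
  have : 0 < 17 / 4 - 57 / 2 * v ^ 2 + 81 / 4 * v ^ 4 := by nlinarith
  positivity

noncomputable def digammaRem (t : ℝ) : ℝ := log t - digamma t - 1 / (2 * t)

noncomputable def factorialSeries (s : ℝ) : ℝ :=
  1 / (12 * (s * (s + 1))) + 1 / (12 * (s * (s + 1) * (s + 2)))
  + 19 / (120 * (s * (s + 1) * (s + 2) * (s + 3)))
  + 9 / (20 * (s * (s + 1) * (s + 2) * (s + 3) * (s + 4)))
  + 863 / (504 * (s * (s + 1) * (s + 2) * (s + 3) * (s + 4) * (s + 5)))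
  + 1375 / (168 * (s * (s + 1) * (s + 2) * (s + 3) * (s + 4) * (s + 5) * (s + 6)))

-- Each rational inequality below is checked by writing the difference of its two sides as a
-- polynomial in `s - 1` with positive coefficients over a positive denominator.

lemma factorialSeries_le_div {s : ℝ} (hs : 1 ≤ s) : factorialSeries s ≤ 11 / s := by
  have hy : 0 ≤ s - 1 := by linarith
  have h0 : 0 < s := by linarith
  rw [← sub_nonneg]
  have key : 11 / s - factorialSeries s
      = (138820952 + 221762090 * (s - 1) + 141190224 * (s - 1) ^ 2 + 46097331 * (s - 1) ^ 3
          + 8171940 * (s - 1) ^ 4 + 748230 * (s - 1) ^ 5 + 27720 * (s - 1) ^ 6)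
        / (2520 * (s * (s + 1) * (s + 2) * (s + 3) * (s + 4) * (s + 5) * (s + 6))) := by
    unfold factorialSeries
    field_simp
    ring
  rw [key]
  positivity

lemma artanhGapUpper_lt {s : ℝ} (hs : 1 ≤ s) :
    artanhGapUpper (1 / (2 * s + 1)) < 1 / (12 * s ^ 2) - 1 / (12 * (s + 1) ^ 2) := by
  have hy : 0 ≤ s - 1 := by linarith
  have h0 : 0 < s := by linarith
  rw [← sub_pos]
  have key : 1 / (12 * s ^ 2) - 1 / (12 * (s + 1) ^ 2) - artanhGapUpper (1 / (2 * s + 1))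
      = (2235924 + 11879136 * (s - 1) + 27641844 * (s - 1) ^ 2 + 36772920 * (s - 1) ^ 3
          + 30583476 * (s - 1) ^ 4 + 16284672 * (s - 1) ^ 5 + 5422080 * (s - 1) ^ 6
          + 1032192 * (s - 1) ^ 7 + 86016 * (s - 1) ^ 8)
        / (5040 * (s ^ 2 * (s + 1) ^ 2 * (2 * s + 1) ^ 9)) := by
    unfold artanhGapUpper artanhGapLower
    field_simp
    ring
  rw [key]
  positivity

lemma factorialSeries_sub_le {s : ℝ} (hs : 1 ≤ s) :
    factorialSeries s - factorialSeries (s + 1) ≤ artanhGapLower (1 / (2 * s + 1)) := by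
  have hy : 0 ≤ s - 1 := by linarith
  have h0 : 0 < s := by linarith
  rw [← sub_nonneg]
  have key : artanhGapLower (1 / (2 * s + 1)) - (factorialSeries s - factorialSeries (s + 1))
      = (156194690715 + 619356672270 * (s - 1) + 1018363820040 * (s - 1) ^ 2
          + 892739628900 * (s - 1) ^ 3 + 440663477310 * (s - 1) ^ 4
          + 116163845280 * (s - 1) ^ 5 + 12777075360 * (s - 1) ^ 6)
        / (264600 * ((2 * s + 1) ^ 7
          * (s * (s + 1) * (s + 2) * (s + 3) * (s + 4) * (s + 5) * (s + 6) * (s + 7)))) := by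
    unfold artanhGapLower factorialSeries
    field_simp
    ring
  rw [key]
  positivity

lemma sq_mul_artanhGapUpper_le {s : ℝ} (hs : 1 ≤ s) :
    s ^ 2 * artanhGapUpper (1 / (2 * s + 1)) ≤ (2 * s + 1) * factorialSeries (s + 1) := by
  have hy : 0 ≤ s - 1 := by linarith
  have h0 : 0 < s := by linarith
  rw [← sub_nonneg]
  have key : (2 * s + 1) * factorialSeries (s + 1) - s ^ 2 * artanhGapUpper (1 / (2 * s + 1))
      = (5359019697 + 30456764883 * (s - 1) + 78336389763 * (s - 1) ^ 2
          + 121017609441 * (s - 1) ^ 3 + 125958233304 * (s - 1) ^ 4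
          + 94007294280 * (s - 1) ^ 5 + 52120465236 * (s - 1) ^ 6
          + 21729038436 * (s - 1) ^ 7 + 6712784130 * (s - 1) ^ 8
          + 1469648346 * (s - 1) ^ 9 + 211904768 * (s - 1) ^ 10 + 18478336 * (s - 1) ^ 11
          + 946176 * (s - 1) ^ 12 + 21504 * (s - 1) ^ 13)
        / (2520 * (((s + 1) * (s + 2) * (s + 3) * (s + 4) * (s + 5) * (s + 6) * (s + 7))
          * (2 * s + 1) ^ 9)) := by
    unfold artanhGapUpper artanhGapLower factorialSeries
    field_simp
    ring
  rw [key]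
  positivity

lemma one_div_le_factorialSeries {s : ℝ} (hs : 0 < s) :
    1 / (12 * (s * (s + 1))) ≤ factorialSeries s := by
  unfold factorialSeries
  have : 0 ≤ 1 / (12 * (s * (s + 1) * (s + 2))) + 19 / (120 * (s * (s + 1) * (s + 2) * (s + 3)))
      + 9 / (20 * (s * (s + 1) * (s + 2) * (s + 3) * (s + 4)))
      + 863 / (504 * (s * (s + 1) * (s + 2) * (s + 3) * (s + 4) * (s + 5)))
      + 1375 / (168 * (s * (s + 1) * (s + 2) * (s + 3) * (s + 4) * (s + 5) * (s + 6))) := by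
    positivity
  linarith

lemma tendsto_factorialSeries_atTop : Tendsto factorialSeries atTop (𝓝 0) := by
  refine tendsto_of_tendsto_of_tendsto_of_le_of_le' tendsto_const_nhds
    ((tendsto_const_nhds (x := (11 : ℝ))).div_atTop tendsto_id) ?_ ?_
  all_goals filter_upwards [eventually_ge_atTop 1] with s hs
  · exact (one_div_le_factorialSeries (by linarith)).trans' (by positivity)
  · exact factorialSeries_le_div hs

lemma digammaRem_sub_digammaRem_add_one {s : ℝ} (hs : 0 < s) :
    digammaRem s - digammaRem (s + 1) = artanhGap (1 / (2 * s + 1)) := by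
  have h1 : 0 < s + 1 := by linarith
  have hc : 0 < 2 / (2 * s + 1) := by positivity
  have hlog : log (1 + 1 / (2 * s + 1)) - log (1 - 1 / (2 * s + 1)) = log (s + 1) - log s := by
    rw [show 1 + 1 / (2 * s + 1) = (s + 1) * (2 / (2 * s + 1)) by field_simp; ring,
      show 1 - 1 / (2 * s + 1) = s * (2 / (2 * s + 1)) by field_simp; ring,
      log_mul h1.ne' hc.ne', log_mul hs.ne' hc.ne']
    ring
  have hfrac : 2 * (1 / (2 * s + 1)) / (1 - (1 / (2 * s + 1)) ^ 2)
      = 1 / (2 * s) + 1 / (2 * (s + 1)) := by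
    rw [show 1 - (1 / (2 * s + 1)) ^ 2 = 4 * s * (s + 1) / (2 * s + 1) ^ 2 by field_simp; ring]
    field_simp
    ring
  rw [digammaRem, digammaRem, digamma_add_one hs, artanhGap, hlog, hfrac]
  field_simp
  ring

lemma tendsto_digammaRem_atTop : Tendsto digammaRem atTop (𝓝 0) := by
  have := tendsto_log_sub_digamma_atTop.sub
    ((tendsto_const_nhds (x := (1 : ℝ))).div_atTop (tendsto_id.const_mul_atTop two_pos))
  rwa [sub_zero] at this

lemma digammaRem_lt {t : ℝ} (ht : 1 ≤ t) : digammaRem t < 1 / (12 * t ^ 2) := by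
  have hstep : ∀ s, 1 ≤ s →
      digammaRem s - digammaRem (s + 1) < 1 / (12 * s ^ 2) - 1 / (12 * (s + 1) ^ 2) := by
    intro s hs
    rw [digammaRem_sub_digammaRem_add_one (by linarith)]
    exact (artanhGap_le_artanhGapUpper (by positivity) (by rw [div_le_div_iff₀] <;> linarith)
      ).trans_lt (artanhGapUpper_lt hs)
  have hnext : digammaRem (t + 1) ≤ 1 / (12 * (t + 1) ^ 2) :=
    le_of_sub_add_one_le_of_tendsto tendsto_digammaRem_atTop
      (tendsto_const_nhds.div_atTop ((tendsto_pow_atTop two_ne_zero).const_mul_atTop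
        (by norm_num)))
      fun s hs => (hstep s (by linarith)).le
  linarith [hstep t ht]

lemma factorialSeries_le_digammaRem {t : ℝ} (ht : 1 ≤ t) : factorialSeries t ≤ digammaRem t :=
  le_of_sub_add_one_le_of_tendsto tendsto_factorialSeries_atTop tendsto_digammaRem_atTop
    fun s hs => by
      have hs0 : 0 < s := by linarith
      rw [digammaRem_sub_digammaRem_add_one hs0]
      exact (factorialSeries_sub_le (ht.trans hs)).trans
        (artanhGapLower_le (by positivity) (by rw [div_lt_one] <;> linarith))

lemma sq_mul_digammaRem_le_add_one {t : ℝ} (ht : 1 ≤ t) :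
    t ^ 2 * digammaRem t ≤ (t + 1) ^ 2 * digammaRem (t + 1) := by
  have hgap := artanhGap_le_artanhGapUpper (u := 1 / (2 * t + 1)) (by positivity)
    (by rw [div_le_div_iff₀] <;> linarith)
  have hnext := factorialSeries_le_digammaRem (by linarith : 1 ≤ t + 1)
  have hdiff :
      t ^ 2 * (digammaRem t - digammaRem (t + 1)) ≤ (2 * t + 1) * digammaRem (t + 1) := by
    rw [digammaRem_sub_digammaRem_add_one (by linarith)]
    exact (mul_le_mul_of_nonneg_left hgap (by positivity)).trans
      ((sq_mul_artanhGapUpper_le ht).trans (mul_le_mul_of_nonneg_left hnext (by linarith)))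
  linarith

lemma sq_mul_digammaRem_le_add_nat {t : ℝ} (ht : 1 ≤ t) (k : ℕ) :
    t ^ 2 * digammaRem t ≤ (t + k) ^ 2 * digammaRem (t + k) := by
  have hmono : Monotone fun k : ℕ => (t + k) ^ 2 * digammaRem (t + k) :=
    monotone_nat_of_le_succ fun k => by
      push_cast
      rw [← add_assoc]
      exact sq_mul_digammaRem_le_add_one (by linarith [k.cast_nonneg (α := ℝ)])
  simpa using hmono k.zero_le

lemma tendsto_sq_mul_digammaRem_atTop :
    Tendsto (fun t => t ^ 2 * digammaRem t) atTop (𝓝 (1 / 12)) := by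
  have hlow : Tendsto (fun t : ℝ => 1 / 12 - 1 / (12 * (t + 1))) atTop (𝓝 (1 / 12)) := by
    have := (tendsto_const_nhds (x := (1 / 12 : ℝ))).sub
      ((tendsto_const_nhds (x := (1 : ℝ))).div_atTop
        ((tendsto_atTop_add_const_right _ 1 tendsto_id).const_mul_atTop
          (by norm_num : (0 : ℝ) < 12)))
    rwa [sub_zero] at this
  refine tendsto_of_tendsto_of_tendsto_of_le_of_le' hlow tendsto_const_nhds ?_ ?_
  all_goals filter_upwards [eventually_ge_atTop 1] with t ht
  · have ht0 : 0 < t := by linarith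
    calc 1 / 12 - 1 / (12 * (t + 1)) = t ^ 2 * (1 / (12 * (t * (t + 1)))) := by
          field_simp
          ring
      _ ≤ t ^ 2 * digammaRem t := by
          gcongr
          exact (one_div_le_factorialSeries ht0).trans (factorialSeries_le_digammaRem ht)
  · have := digammaRem_lt ht
    rw [lt_div_iff₀ (by positivity)] at this
    linarith

theorem main_thm2_part1 (a : ℝ) (ha : 0 < a) :
    let γa : ℝ := Real.log a - digamma a
    let x : ℕ → ℝ := fun n => digamma (n + a) - digamma a - Real.log ((n + a) / a)
    let α₃ : ℝ := (1 + a) ^ 2 * (Real.log (1 + a) - digamma (1 + a)) - (1 + a) / 2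
    (∀ n : ℕ, 1 ≤ n →
      1 / (2 * (n + a)) + α₃ / (n + a) ^ 2 ≤ γa - x n ∧
      γa - x n < 1 / (2 * (n + a)) + 1 / (12 * (n + a) ^ 2)) ∧
    γa - x 1 = 1 / (2 * (1 + a)) + α₃ / (1 + a) ^ 2 ∧
    (∀ β : ℝ, β < 1/12 → ∃ n : ℕ, 1 ≤ n ∧
      1 / (2 * (n + a)) + β / (n + a) ^ 2 ≤ γa - x n) := by
  intro γa x α₃
  have hx : ∀ n : ℕ, γa - x n = 1 / (2 * (n + a)) + digammaRem (n + a) := fun n => by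
    simp only [γa, x, digammaRem]
    rw [log_div (by positivity) ha.ne']
    ring
  have hα : α₃ = (1 + a) ^ 2 * digammaRem (1 + a) := by
    simp only [α₃, digammaRem]
    field_simp
  refine ⟨fun n hn => ⟨?_, ?_⟩, ?_, fun β hβ => ?_⟩
  · obtain ⟨k, rfl⟩ := Nat.exists_eq_add_of_le hn
    have hle := sq_mul_digammaRem_le_add_nat (by linarith : 1 ≤ 1 + a) k
    rw [hx, add_le_add_iff_left, div_le_iff₀ (by positivity), mul_comm, hα,
      show ((1 + k : ℕ) : ℝ) + a = 1 + a + k by push_cast; ring]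
    exact hle
  · rw [hx, add_lt_add_iff_left]
    exact digammaRem_lt (by linarith [(Nat.one_le_cast.mpr hn : (1 : ℝ) ≤ n)])
  · rw [hx, hα]
    push_cast
    field_simp
  · obtain ⟨n, hβn, hn⟩ := (((tendsto_sq_mul_digammaRem_atTop.comp
      (tendsto_atTop_add_const_right _ a tendsto_natCast_atTop_atTop)).eventually
        (eventually_gt_nhds hβ)).and (eventually_ge_atTop 1)).exists
    refine ⟨n, hn, ?_⟩
    rw [hx, add_le_add_iff_left, div_le_iff₀ (by positivity), mul_comm]
    exact hβn.le
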